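/- Let k be a fixed positive integer, let a, σ be real numbers with 0 < |a| < 1 and σ > 0, let b = a^k, and let (α_n)_{n ≥ 0} be a sequence of real numbers with |α_n| ≤ σ for all n. If σ < (1 − |a|)/(1 − |a|^k), then every solution (x_n)_{n ≥ −k} of the difference equation x_{n+1} = a x_n + α_n · tanh(x_n − b x_{n−k}) over the real numbers converges to zero. -/

import Mathlib

/-!
Put `yₙ = xₙ - b x_{n-k}`. Iterating the equation `k` times from `xₙ` gives
`y_{n+k} = ∑_{i<k} a^{k-1-i} α_{n+i} tanh y_{n+i}`; since `|tanh t| ≤ min 1 |t|`, this makes `y`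
a delayed contraction with factor `c = σ ∑_{i<k} |a|^i`, and `c < 1` is exactly the hypothesis
on `σ`. So `|yₙ| ≤ c^{m+1}` once `n ≥ k (m + 1)`, the forcing `αₙ tanh yₙ` tends to zero, and the
stable recurrence `x_{n+1} = a xₙ + αₙ tanh yₙ` with `|a| < 1` carries `x` to zero.
-/

open Filter Topology Finset

namespace Real

lemma sinh_le_mul_cosh {t : ℝ} (ht : 0 ≤ t) : sinh t ≤ t * cosh t := by
  have hderiv (s : ℝ) : HasDerivAt (fun s => s * cosh s - sinh s) (s * sinh s) s :=
    (((hasDerivAt_id' s).mul (hasDerivAt_cosh s)).sub (hasDerivAt_sinh s)).congr_deriv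
      (by ring)
  have hmono : Monotone fun s => s * cosh s - sinh s := by
    refine monotone_of_deriv_nonneg (fun s => (hderiv s).differentiableAt) fun s => ?_
    rw [(hderiv s).deriv]
    rcases le_total 0 s with hs | hs
    · exact mul_nonneg hs (sinh_nonneg_iff.2 hs)
    · exact mul_nonneg_of_nonpos_of_nonpos hs (sinh_nonpos_iff.2 hs)
  simpa using hmono ht

lemma abs_sinh_le_abs_mul_cosh (t : ℝ) : |sinh t| ≤ |t| * cosh t := by
  rcases le_total 0 t with ht | ht
  · rw [abs_of_nonneg (sinh_nonneg_iff.2 ht), abs_of_nonneg ht]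
    exact sinh_le_mul_cosh ht
  · rw [abs_of_nonpos (sinh_nonpos_iff.2 ht), abs_of_nonpos ht]
    simpa using sinh_le_mul_cosh (neg_nonneg.2 ht)

lemma abs_tanh_le_abs (t : ℝ) : |tanh t| ≤ |t| := by
  rw [tanh_eq_sinh_div_cosh, abs_div, abs_of_pos (cosh_pos t), div_le_iff₀ (cosh_pos t)]
  exact abs_sinh_le_abs_mul_cosh t

end Real

lemma mul_geom_sum_lt_one {r σ : ℝ} {k : ℕ} (hr0 : 0 ≤ r) (hr1 : r < 1)
    (hσ : σ < (1 - r) / (1 - r ^ k)) : σ * ∑ i ∈ range k, r ^ i < 1 := by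
  rcases k.eq_zero_or_pos with rfl | hk
  · simp
  rw [lt_div_iff₀ (sub_pos.2 (pow_lt_one₀ hr0 hr1 hk.ne')), ← geom_sum_mul_neg, ← mul_assoc] at hσ
  exact lt_of_mul_lt_mul_right (by rwa [one_mul]) (sub_nonneg.2 hr1.le)

lemma abs_sum_pow_mul_le {a B : ℝ} {k : ℕ} {g : ℕ → ℝ} (hg : ∀ i < k, |g i| ≤ B) :
    |∑ i ∈ range k, a ^ (k - 1 - i) * g i| ≤ (∑ i ∈ range k, |a| ^ i) * B := by
  calc |∑ i ∈ range k, a ^ (k - 1 - i) * g i|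
      ≤ ∑ i ∈ range k, |a| ^ (k - 1 - i) * B := by
        refine (abs_sum_le_sum_abs _ _).trans (sum_le_sum fun i hi => ?_)
        rw [abs_mul, abs_pow]
        exact mul_le_mul_of_nonneg_left (hg i (mem_range.1 hi)) (by positivity)
    _ = (∑ i ∈ range k, |a| ^ i) * B := by
        rw [← sum_mul, sum_range_reflect (fun i => |a| ^ i) k]

lemma linear_recurrence_add_eq {R : Type*} [CommSemiring R] {u f : ℕ → R} {a : R}
    (hu : ∀ n, u (n + 1) = a * u n + f n) (n m : ℕ) :
    u (n + m) = a ^ m * u n + ∑ i ∈ range m, a ^ (m - 1 - i) * f (n + i) := by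
  induction m generalizing n with
  | zero => simp
  | succ m ih =>
    rw [show n + (m + 1) = n + 1 + m by omega, ih, hu, sum_range_succ']
    have hterm (i : ℕ) :
        a ^ (m + 1 - 1 - (i + 1)) * f (n + (i + 1)) = a ^ (m - 1 - i) * f (n + 1 + i) := by
      congr 2 <;> omega
    rw [sum_congr rfl fun i _ => hterm i, add_tsub_cancel_right, tsub_zero, add_zero]
    ring

lemma tendsto_zero_of_le_mul_add {v e : ℕ → ℝ} {r : ℝ} (hv0 : ∀ n, 0 ≤ v n) (hr0 : 0 ≤ r)
    (hr1 : r < 1) (hv : ∀ n, v (n + 1) ≤ r * v n + e n) (he : Tendsto e atTop (𝓝 0)) :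
    Tendsto v atTop (𝓝 0) := by
  refine tendsto_order.2 ⟨fun ε hε => .of_forall fun n => hε.trans_le (hv0 n), fun ε hε => ?_⟩
  obtain ⟨N, hN⟩ := eventually_atTop.1 ((tendsto_order.1 he).2 (ε / 2 * (1 - r)) (by nlinarith))
  have hgeom (m : ℕ) : v (N + m) - ε / 2 ≤ r ^ m * (v N - ε / 2) := by
    induction m with
    | zero => simp
    | succ m ih =>
      calc v (N + m + 1) - ε / 2 ≤ r * (v (N + m) - ε / 2) := by
            nlinarith [hv (N + m), hN (N + m) (Nat.le_add_right N m)]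
        _ ≤ r * (r ^ m * (v N - ε / 2)) := mul_le_mul_of_nonneg_left ih hr0
        _ = r ^ (m + 1) * (v N - ε / 2) := by ring
  have hpow : Tendsto (fun m => r ^ m * (v N - ε / 2)) atTop (𝓝 0) := by
    simpa using (tendsto_pow_atTop_nhds_zero_of_lt_one hr0 hr1).mul_const (v N - ε / 2)
  obtain ⟨M, hM⟩ := eventually_atTop.1 ((tendsto_order.1 hpow).2 (ε / 2) (by positivity))
  refine eventually_atTop.2 ⟨N + M, fun n hn => ?_⟩
  obtain ⟨m, rfl⟩ := Nat.exists_eq_add_of_le (le_of_add_le_left hn)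
  linarith [hgeom m, hM m (by omega)]

lemma tendsto_zero_of_linear_recurrence {R : Type*} [SeminormedRing R] {u f : ℕ → R} {a : R}
    (ha : ‖a‖ < 1) (hu : ∀ n, u (n + 1) = a * u n + f n) (hf : Tendsto f atTop (𝓝 0)) :
    Tendsto u atTop (𝓝 0) := by
  refine tendsto_zero_iff_norm_tendsto_zero.2 <|
    tendsto_zero_of_le_mul_add (fun n => norm_nonneg _) (norm_nonneg a) ha (fun n => ?_)
      (tendsto_zero_iff_norm_tendsto_zero.1 hf)
  rw [hu]
  exact (norm_add_le _ _).trans (add_le_add_left (norm_mul_le _ _) _)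

section DelayedContraction

variable {y z : ℕ → ℝ} {k : ℕ} {c : ℝ}

lemma abs_le_pow_of_delayed_contraction (hz1 : ∀ n, |z n| ≤ 1) (hzy : ∀ n, |z n| ≤ |y n|)
    (hy : ∀ n B, (∀ i < k, |z (n + i)| ≤ B) → |y (n + k)| ≤ c * B) (m : ℕ) :
    ∀ n, k * (m + 1) ≤ n → |y n| ≤ c ^ (m + 1) := by
  induction m with
  | zero =>
    intro n hn
    obtain ⟨n, rfl⟩ := Nat.exists_eq_add_of_le' (by simpa using hn)
    simpa using hy n 1 fun i _ => hz1 _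
  | succ m ih =>
    intro n hn
    rw [Nat.mul_succ] at hn
    obtain ⟨n, rfl⟩ := Nat.exists_eq_add_of_le' (le_of_add_le_right hn)
    rw [pow_succ']
    exact hy n _ fun i _ => (hzy _).trans (ih _ (by omega))

lemma tendsto_zero_of_delayed_contraction (hc0 : 0 ≤ c) (hc1 : c < 1) (hz1 : ∀ n, |z n| ≤ 1)
    (hzy : ∀ n, |z n| ≤ |y n|)
    (hy : ∀ n B, (∀ i < k, |z (n + i)| ≤ B) → |y (n + k)| ≤ c * B) :
    Tendsto y atTop (𝓝 0) := by
  refine Metric.tendsto_atTop.2 fun ε hε => ?_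
  obtain ⟨m, hm⟩ := exists_pow_lt_of_lt_one hε hc1
  refine ⟨k * (m + 1), fun n hn => ?_⟩
  rw [Real.dist_0_eq_abs]
  calc |y n| ≤ c ^ (m + 1) := abs_le_pow_of_delayed_contraction hz1 hzy hy m n hn
    _ ≤ c ^ m := pow_le_pow_of_le_one hc0 hc1.le m.le_succ
    _ < ε := hm

end DelayedContraction

theorem global_attractivity_tanh_delay_equation_general
    (k : ℕ) (a σ : ℝ) (ha1 : |a| < 1)
    (b : ℝ) (hb : b = a ^ k)
    (α : ℕ → ℝ) (hα : ∀ n : ℕ, |α n| ≤ σ)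
    (hσ : σ < (1 - |a|) / (1 - |a| ^ k))
    (x : ℤ → ℝ)
    (hx : ∀ n : ℤ, 0 ≤ n → x (n + 1) =
      a * x n + α n.toNat * Real.tanh (x n - b * x (n - (k : ℤ)))) :
    Filter.Tendsto (fun n : ℕ => x (n : ℤ)) Filter.atTop (nhds 0) := by
  set y : ℕ → ℝ := fun n => x n - b * x (n - k)
  have hrec (n : ℕ) : x ↑(n + 1) = a * x n + α n * Real.tanh (y n) := by
    simpa using hx n n.cast_nonneg
  have hdelay (n : ℕ) :
      y (n + k) = ∑ i ∈ range k, a ^ (k - 1 - i) * (α (n + i) * Real.tanh (y (n + i))) := by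
    have hsol := linear_recurrence_add_eq (u := fun n : ℕ => x n) hrec n k
    show x ↑(n + k) - b * x (↑(n + k) - k) = _
    rw [hsol, hb, Nat.cast_add, add_sub_cancel_right]
    ring
  have hσ0 : 0 ≤ σ := (abs_nonneg _).trans (hα 0)
  have hy0 : Tendsto y atTop (𝓝 0) := by
    refine tendsto_zero_of_delayed_contraction (z := fun n => Real.tanh (y n)) (k := k)
      (by positivity) (mul_geom_sum_lt_one (abs_nonneg a) ha1 hσ)
      (fun n => (Real.abs_tanh_lt_one _).le) (fun n => Real.abs_tanh_le_abs _) fun n B hB => ?_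
    rw [hdelay]
    refine (abs_sum_pow_mul_le (B := σ * B) fun i hi => ?_).trans_eq (by ring)
    rw [abs_mul]
    exact mul_le_mul (hα _) (hB i hi) (abs_nonneg _) hσ0
  have hforce : Tendsto (fun n => α n * Real.tanh (y n)) atTop (𝓝 0) := by
    refine squeeze_zero_norm (fun n => ?_) (by simpa using (hy0.abs.const_mul σ))
    rw [Real.norm_eq_abs, abs_mul]
    exact mul_le_mul (hα n) (Real.abs_tanh_le_abs _) (abs_nonneg _) hσ0
  exact tendsto_zero_of_linear_recurrence (by rwa [Real.norm_eq_abs]) hrec hforce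

/-- **Example (equation (dham)).** For real numbers `a, σ` with `0 < |a| < 1`,
`σ > 0`, `b = a^k`, and a real sequence `(αₙ)` with `|αₙ| ≤ σ`, if
`σ < (1 − |a|)/(1 − |a|^k)` then every solution of
`x_{n+1} = a xₙ + αₙ tanh(xₙ − b x_{n−k})` converges to zero. -/
theorem global_attractivity_tanh_delay_equation
    (k : ℕ) (hk : 0 < k) (a σ : ℝ) (ha0 : 0 < |a|) (ha1 : |a| < 1) (hσ0 : 0 < σ)
    (b : ℝ) (hb : b = a ^ k)
    (α : ℕ → ℝ) (hα : ∀ n : ℕ, |α n| ≤ σ)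
    (hσ : σ < (1 - |a|) / (1 - |a| ^ k))
    (x : ℤ → ℝ)
    (hx : ∀ n : ℤ, 0 ≤ n → x (n + 1) =
      a * x n + α n.toNat * Real.tanh (x n - b * x (n - (k : ℤ)))) :
    Filter.Tendsto (fun n : ℕ => x (n : ℤ)) Filter.atTop (nhds 0) :=
  global_attractivity_tanh_delay_equation_general k a σ ha1 b hb α hα hσ x hx
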